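/- arXiv:2402.14754 — 2 statements merged into one kernel-verified Lean document; each statement's English description precedes it below -/
import Mathlib

section
/- Let λ be a Young diagram with even profile. Then mult(λ, k) = 0 for every odd integer k ≥ 0. -/
open scoped Classical

namespace YoungDiagram

/-- `lam / μ` is a vertical strip of length `k`: `μ ⊆ lam`, the complement consists of
exactly `k` boxes, and no two boxes of the complement lie in the same row. -/
def IsVerticalStrip (μ lam : YoungDiagram) (k : ℕ) : Prop :=
  μ ≤ lam ∧ (lam.cells \ μ.cells).card = k ∧
    ∀ c₁ ∈ lam.cells \ μ.cells, ∀ c₂ ∈ lam.cells \ μ.cells, c₁.1 = c₂.1 → c₁ = c₂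

/-- Every column of `μ` has even length. -/
def HasEvenColumns (μ : YoungDiagram) : Prop := ∀ j, Even (μ.colLen j)

/-- `mult lam k` is the number of subdiagrams `μ ⊆ lam` with even columns such that
`lam / μ` is a vertical strip of length `k`. -/
noncomputable def mult (lam : YoungDiagram) (k : ℕ) : ℕ :=
  Nat.card {μ : YoungDiagram // μ ≤ lam ∧ μ.HasEvenColumns ∧ IsVerticalStrip μ lam k}

/-- The height of a Young diagram: the number of nonempty rows. -/
def ht (lam : YoungDiagram) : ℕ := lam.colLen 0

/-- A Young diagram is mildly odd if for every odd `m` it has at most one column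
of length exactly `m`. -/
def MildlyOdd (lam : YoungDiagram) : Prop :=
  ∀ m : ℕ, Odd m → ∀ j₁ j₂ : ℕ, lam.colLen j₁ = m → lam.colLen j₂ = m → j₁ = j₂

/-- The number of columns of odd length. -/
noncomputable def oddColumns (lam : YoungDiagram) : ℕ :=
  ((Finset.range (lam.rowLen 0)).filter fun j => Odd (lam.colLen j)).card

/-- The profile of a Young diagram: for the distinct nonzero row lengths
`ℓ₀ > ℓ₁ > … > ℓₙ`, the list of multiplicities `hᵢ = #{rows of length ℓᵢ}`. -/
noncomputable def profile (lam : YoungDiagram) : List ℕ :=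
  lam.rowLens.dedup.map fun ℓ => lam.rowLens.count ℓ

/-- Every entry of the profile is even. -/
def HasEvenProfile (lam : YoungDiagram) : Prop := ∀ h ∈ lam.profile, Even h

lemma aux_even_countP (l : List ℕ) (p : ℕ → Bool) (h : ∀ x ∈ l, Even (l.count x)) :
    Even (l.countP p) := by
  classical
  have : l.countP p = Multiset.card (Multiset.filter (fun x => p x = true) (↑l : Multiset ℕ)) := by
    simp [Multiset.filter_coe, List.countP_eq_length_filter]
  rw [this, ← Multiset.toFinset_sum_count_eq]
  apply Finset.even_sum
  intro a ha
  rw [Multiset.count_filter]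
  rw [Multiset.mem_toFinset, Multiset.mem_filter] at ha
  simp only [ha.2, if_true]
  have := h a (by simpa using ha.1)
  simpa using this

lemma aux_colLen_eq_countP (lam : YoungDiagram) (j : ℕ) :
    lam.colLen j = lam.rowLens.countP (fun ℓ => decide (j < ℓ)) := by
  rw [rowLens, List.countP_map]
  have h2 : ((List.range (lam.colLen 0)).countP ((fun ℓ => decide (j < ℓ)) ∘ lam.rowLen))
      = ((List.range (lam.colLen 0)).filter fun i => decide (j < lam.rowLen i)).length := by
    rw [List.countP_eq_length_filter]
    rfl
  rw [h2]
  have h4 : (((List.range (lam.colLen 0)).filter fun i => decide (j < lam.rowLen i)).length)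
      = ((Finset.range (lam.colLen 0)).filter fun i => j < lam.rowLen i).card := rfl
  rw [h4]
  have h5 : (Finset.range (lam.colLen 0)).filter (fun i => j < lam.rowLen i)
      = Finset.range (lam.colLen j) := by
    ext i
    simp only [Finset.mem_filter, Finset.mem_range]
    constructor
    · rintro ⟨-, h⟩
      rw [← mem_iff_lt_colLen, mem_iff_lt_rowLen]
      exact h
    · intro h
      rw [← mem_iff_lt_colLen] at h
      refine ⟨?_, mem_iff_lt_rowLen.mp h⟩
      rw [← mem_iff_lt_colLen]
      exact lam.up_left_mem le_rfl (Nat.zero_le _) h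
  rw [h5, Finset.card_range]

lemma aux_even_colLen (lam : YoungDiagram) (hep : lam.HasEvenProfile) :
    lam.HasEvenColumns := by
  intro j
  rw [aux_colLen_eq_countP]
  apply aux_even_countP
  intro ℓ hℓ
  exact hep _ (List.mem_map.mpr ⟨ℓ, List.mem_dedup.mpr hℓ, rfl⟩)

lemma aux_even_card (μ : YoungDiagram) (h : μ.HasEvenColumns) : Even μ.cells.card := by
  classical
  have hcells : μ.cells = (Finset.range (μ.rowLen 0)).biUnion μ.col := by
    ext c
    simp only [Finset.mem_biUnion, Finset.mem_range]
    constructor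
    · intro hc
      refine ⟨c.2, ?_, ?_⟩
      · rw [← mem_iff_lt_rowLen]
        exact μ.up_left_mem (Nat.zero_le _) le_rfl (by simpa using hc)
      · rw [mem_col_iff]
        exact ⟨by simpa using hc, rfl⟩
    · rintro ⟨j, -, hc⟩
      rw [mem_col_iff] at hc
      simpa using hc.1
  rw [hcells, Finset.card_biUnion]
  · apply Finset.even_sum
    intro j _
    rw [← colLen_eq_card]
    exact h j
  · intro j₁ _ j₂ _ hne
    apply Finset.disjoint_left.mpr
    intro c hc₁ hc₂
    rw [mem_col_iff] at hc₁ hc₂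
    exact hne (hc₁.2 ▸ hc₂.2)

end YoungDiagram

/-- for a diagram with even profile, `mult lam k = 0` for every odd `k`. -/
theorem mult_eq_zero_of_odd (lam : YoungDiagram) (hep : lam.HasEvenProfile)
    (k : ℕ) (hk : Odd k) :
    lam.mult k = 0 := by
  rw [YoungDiagram.mult, Nat.card_eq_zero]
  left
  constructor
  rintro ⟨μ, hle, hec, -, hcard, -⟩
  have hsub : μ.cells ⊆ lam.cells := YoungDiagram.cells_subset_iff.mpr hle
  have hL : Even lam.cells.card :=
    lam.aux_even_card (lam.aux_even_colLen hep)
  have hM : Even μ.cells.card := μ.aux_even_card hec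
  rw [Finset.card_sdiff_of_subset hsub] at hcard
  have hle' : μ.cells.card ≤ lam.cells.card := Finset.card_le_card hsub
  obtain ⟨a, ha⟩ := hL
  obtain ⟨b, hb⟩ := hM
  obtain ⟨c, hc⟩ := hk
  omega
end

section
/- Let λ be a Young diagram with even profile. Then mult(λ, k) = mult(λ, ht(λ) − k) for every integer k with 0 ≤ k ≤ ht(λ); that is, the function k ↦ mult(λ, k) is symmetric around ht(λ)/2 (note that the sum of the profile entries of λ equals ht(λ)). -/
open scoped Classical

namespace YoungDiagram

lemma colLen_le_of_le {μ lam : YoungDiagram} (h : μ ≤ lam) (j : ℕ) :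
    μ.colLen j ≤ lam.colLen j := by
  rcases Nat.eq_zero_or_pos (μ.colLen j) with h0 | h0
  · simp [h0]
  · have hm : (μ.colLen j - 1, j) ∈ μ := by rw [mem_iff_lt_colLen]; omega
    have := h hm
    rw [mem_iff_lt_colLen] at this
    omega

lemma colLen_eq_zero_of_ge {lam : YoungDiagram} {j : ℕ} (h : lam.rowLen 0 ≤ j) :
    lam.colLen j = 0 := by
  by_contra h0
  have : (0, j) ∈ lam := by rw [mem_iff_lt_colLen]; omega
  rw [mem_iff_lt_rowLen] at this
  omega

lemma countP_list_range (p : ℕ → Bool) (N : ℕ) :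
    (List.range N).countP p = ((Finset.range N).filter (fun i => p i = true)).card := by
  induction N with
  | zero => simp
  | succ n ih =>
    rw [List.range_succ, List.countP_append, Finset.range_add_one, Finset.filter_insert]
    cases h : p n
    · simp [ih, h]
    · rw [if_pos rfl, Finset.card_insert_of_notMem (by simp), ← ih]
      simp [h]

lemma count_rowLens (lam : YoungDiagram) (j : ℕ) :
    lam.rowLens.count (j + 1) = lam.colLen j - lam.colLen (j + 1) := by
  have key : lam.rowLens.count (j + 1)
      = ((Finset.range (lam.colLen 0)).filter fun i => lam.rowLen i = j + 1).card := by
    rw [rowLens, List.count_eq_countP, List.countP_map, countP_list_range]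
    congr 1
    apply Finset.filter_congr
    intro i _
    simp [Function.comp, beq_iff_eq]
  rw [key]
  have hset : (Finset.range (lam.colLen 0)).filter (fun i => lam.rowLen i = j + 1)
      = Finset.range (lam.colLen j) \ Finset.range (lam.colLen (j + 1)) := by
    ext i
    simp only [Finset.mem_filter, Finset.mem_range, Finset.mem_sdiff]
    have e0 : i < lam.colLen 0 ↔ 0 < lam.rowLen i := by
      rw [← mem_iff_lt_colLen, mem_iff_lt_rowLen]
    have e1 : i < lam.colLen j ↔ j < lam.rowLen i := by
      rw [← mem_iff_lt_colLen, mem_iff_lt_rowLen]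
    have e2 : i < lam.colLen (j + 1) ↔ j + 1 < lam.rowLen i := by
      rw [← mem_iff_lt_colLen, mem_iff_lt_rowLen]
    omega
  rw [hset, Finset.card_sdiff_of_subset (Finset.range_subset_range.2 (lam.colLen_anti _ _ (by omega)))]
  simp

lemma even_colLen_of_evenProfile {lam : YoungDiagram} (hep : lam.HasEvenProfile)
    (j : ℕ) : Even (lam.colLen j) := by
  have hcount : ∀ m : ℕ, Even (lam.rowLens.count m) := by
    intro m
    by_cases hm : m ∈ lam.rowLens
    · exact hep _ (List.mem_map_of_mem (List.mem_dedup.2 hm))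
    · simp [List.count_eq_zero_of_not_mem hm]
  suffices H : ∀ d j, lam.rowLen 0 ≤ j + d → Even (lam.colLen j) by
    exact H (lam.rowLen 0) j (by omega)
  intro d
  induction d with
  | zero => intro j hj; rw [colLen_eq_zero_of_ge (by omega)]; exact Even.zero
  | succ d ih =>
    intro j hj
    rcases le_or_gt (lam.rowLen 0) (j + d) with h | h
    · exact ih j h
    · have h1 : Even (lam.colLen (j + 1)) := ih (j + 1) (by omega)
      have h2 := count_rowLens lam j
      have h3 : lam.colLen (j + 1) ≤ lam.colLen j := lam.colLen_anti j (j+1) (by omega)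
      have : lam.colLen j = lam.colLen (j + 1) + lam.rowLens.count (j + 1) := by omega
      rw [this]
      exact h1.add (hcount (j + 1))

lemma strip_iff {μ lam : YoungDiagram} (hle : μ ≤ lam) :
    (∀ c₁ ∈ lam.cells \ μ.cells, ∀ c₂ ∈ lam.cells \ μ.cells, c₁.1 = c₂.1 → c₁ = c₂) ↔
      ∀ j, lam.colLen (j + 1) ≤ μ.colLen j := by
  constructor
  · intro h j
    by_contra hc
    push_neg at hc
    have hcl : lam.colLen (j + 1) ≤ lam.colLen j := lam.colLen_anti j (j + 1) (by omega)
    have h1 : (μ.colLen j, j) ∈ lam.cells \ μ.cells := by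
      simp only [Finset.mem_sdiff, mem_cells, mem_iff_lt_colLen]
      omega
    have h2 : (μ.colLen j, j + 1) ∈ lam.cells \ μ.cells := by
      simp only [Finset.mem_sdiff, mem_cells, mem_iff_lt_colLen]
      refine ⟨by omega, fun hmem => ?_⟩
      have : (μ.colLen j, j) ∈ μ := μ.up_left_mem le_rfl (Nat.le_succ j)
        (by rw [mem_iff_lt_colLen]; exact hmem)
      rw [mem_iff_lt_colLen] at this; omega
    have := h _ h1 _ h2 rfl
    simp at this
  · rintro h ⟨i1, j1⟩ h1 ⟨i2, j2⟩ h2 (heq : i1 = i2)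
    subst heq
    rw [Finset.mem_sdiff, mem_cells, mem_cells, mem_iff_lt_colLen, mem_iff_lt_colLen] at h1 h2
    rcases lt_trichotomy j1 j2 with hlt | heq | hlt
    · exfalso
      have : lam.colLen j2 ≤ lam.colLen (j1 + 1) := lam.colLen_anti _ _ (by omega)
      have := h j1
      omega
    · rw [heq]
    · exfalso
      have : lam.colLen j1 ≤ lam.colLen (j2 + 1) := lam.colLen_anti _ _ (by omega)
      have := h j2
      omega

lemma card_sdiff_colLens {μ lam : YoungDiagram} (hle : μ ≤ lam) :
    (lam.cells \ μ.cells).card =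
      ∑ j ∈ Finset.range (lam.rowLen 0), (lam.colLen j - μ.colLen j) := by
  rw [Finset.card_eq_sum_card_fiberwise (f := Prod.snd) (t := Finset.range (lam.rowLen 0))]
  · apply Finset.sum_congr rfl
    intro j _
    have himg : (lam.cells \ μ.cells).filter (fun x => x.2 = j)
        = ((Finset.range (lam.colLen j)).filter fun i => ¬ i < μ.colLen j).image
            (fun i => (i, j)) := by
      ext ⟨a, b⟩
      simp only [Finset.mem_filter, Finset.mem_sdiff, mem_cells, Finset.mem_image,
        Finset.mem_range, mem_iff_lt_colLen, Prod.mk.injEq]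
      constructor
      · rintro ⟨⟨ha, hna⟩, rfl⟩; exact ⟨a, ⟨ha, hna⟩, rfl, rfl⟩
      · rintro ⟨i, ⟨hi, hni⟩, rfl, rfl⟩; exact ⟨⟨hi, hni⟩, rfl⟩
    rw [himg, Finset.card_image_of_injective _ (fun a b hab => by simpa using hab)]
    have : (Finset.range (lam.colLen j)).filter (fun i => ¬ i < μ.colLen j)
        = Finset.range (lam.colLen j) \ Finset.range (μ.colLen j) := by
      ext a; simp [Finset.mem_sdiff]
    rw [this, Finset.card_sdiff_of_subset (Finset.range_subset_range.2 (colLen_le_of_le hle j))]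
    simp
  · rintro ⟨a, b⟩ hx
    rw [Finset.mem_coe, Finset.mem_sdiff, mem_cells] at hx
    have h0 : (0, b) ∈ lam := lam.up_left_mem (Nat.zero_le _) le_rfl hx.1
    rw [mem_iff_lt_rowLen] at h0
    simpa using h0

lemma sum_telescope_colLen (lam : YoungDiagram) :
    ∑ j ∈ Finset.range (lam.rowLen 0), (lam.colLen j - lam.colLen (j + 1)) = lam.ht := by
  have key : ∀ N : ℕ, ∑ j ∈ Finset.range N, (lam.colLen j - lam.colLen (j + 1))
      = lam.colLen 0 - lam.colLen N := by
    intro N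
    induction N with
    | zero => simp
    | succ N ih =>
      rw [Finset.sum_range_succ, ih]
      have h1 : lam.colLen (N + 1) ≤ lam.colLen N := lam.colLen_anti _ _ (by omega)
      have h2 : lam.colLen N ≤ lam.colLen 0 := lam.colLen_anti _ _ (by omega)
      omega
  rw [key, colLen_eq_zero_of_ge le_rfl, ht]
  omega

/-- The "flipped" function of column lengths. -/
def flipf (lam μ : YoungDiagram) (j : ℕ) : ℕ :=
  lam.colLen (j + 1) + lam.colLen j - μ.colLen j

/-- The complementary subdiagram. -/
def flip (lam μ : YoungDiagram) : YoungDiagram where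
  cells := lam.cells.filter fun p => ∀ j' ≤ p.2, p.1 < flipf lam μ j'
  isLowerSet := by
    rintro ⟨i1, j1⟩ ⟨i2, j2⟩ ⟨hi, hj⟩ hp
    simp only [Finset.coe_filter, Set.mem_setOf_eq, mem_cells] at hp ⊢
    refine ⟨lam.isLowerSet ⟨hi, hj⟩ hp.1, fun j' hj' => lt_of_le_of_lt hi ?_⟩
    exact hp.2 j' (le_trans hj' hj)

lemma flipf_anti {lam μ : YoungDiagram} (hle : μ ≤ lam)
    (hs : ∀ j, lam.colLen (j + 1) ≤ μ.colLen j) :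
    Antitone (flipf lam μ) := by
  apply antitone_nat_of_succ_le
  intro j
  have h1 := colLen_le_of_le hle j
  have h2 := colLen_le_of_le hle (j + 1)
  have h3 := hs j
  have h4 := hs (j + 1)
  unfold flipf
  omega

lemma mem_flip {lam μ : YoungDiagram} (hle : μ ≤ lam)
    (hs : ∀ j, lam.colLen (j + 1) ≤ μ.colLen j) {i j : ℕ} :
    (i, j) ∈ flip lam μ ↔ i < flipf lam μ j := by
  show (i, j) ∈ (lam.cells.filter _) ↔ _
  rw [Finset.mem_filter]
  constructor
  · rintro ⟨_, h⟩
    exact h j le_rfl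
  · intro h
    refine ⟨?_, fun j' hj' => lt_of_lt_of_le h (flipf_anti hle hs hj')⟩
    rw [mem_cells, mem_iff_lt_colLen]
    have h1 := hs j
    unfold flipf at h
    omega

lemma colLen_flip {lam μ : YoungDiagram} (hle : μ ≤ lam)
    (hs : ∀ j, lam.colLen (j + 1) ≤ μ.colLen j) (j : ℕ) :
    (flip lam μ).colLen j = flipf lam μ j := by
  apply Nat.le_antisymm
  · by_contra h
    push_neg at h
    have : (flipf lam μ j, j) ∈ flip lam μ := by rw [mem_iff_lt_colLen]; omega
    rw [mem_flip hle hs] at this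
    omega
  · rcases Nat.eq_zero_or_pos (flipf lam μ j) with h0 | h0
    · omega
    · have : (flipf lam μ j - 1, j) ∈ flip lam μ := by rw [mem_flip hle hs]; omega
      rw [mem_iff_lt_colLen] at this
      omega

lemma flip_le {lam μ : YoungDiagram} : flip lam μ ≤ lam := by
  rw [← cells_subset_iff]
  exact Finset.filter_subset _ _

lemma flip_hs {lam μ : YoungDiagram} (hle : μ ≤ lam)
    (hs : ∀ j, lam.colLen (j + 1) ≤ μ.colLen j) (j : ℕ) :
    lam.colLen (j + 1) ≤ (flip lam μ).colLen j := by
  rw [colLen_flip hle hs]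
  have := colLen_le_of_le hle j
  unfold flipf
  omega

lemma flip_flip {lam μ : YoungDiagram} (hle : μ ≤ lam)
    (hs : ∀ j, lam.colLen (j + 1) ≤ μ.colLen j) :
    flip lam (flip lam μ) = μ := by
  apply SetLike.ext
  rintro ⟨i, j⟩
  rw [mem_flip flip_le (flip_hs hle hs), mem_iff_lt_colLen]
  unfold flipf
  rw [colLen_flip hle hs]
  have h1 := colLen_le_of_le hle j
  have h2 := hs j
  unfold flipf
  omega

lemma flip_card {lam μ : YoungDiagram} {k : ℕ} (hle : μ ≤ lam)
    (hs : ∀ j, lam.colLen (j + 1) ≤ μ.colLen j)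
    (hcard : (lam.cells \ μ.cells).card = k) :
    k ≤ lam.ht ∧ (lam.cells \ (flip lam μ).cells).card = lam.ht - k := by
  have hc1 := card_sdiff_colLens hle
  have hc2 := card_sdiff_colLens (flip_le (lam := lam) (μ := μ))
  have hsum : (lam.cells \ μ.cells).card + (lam.cells \ (flip lam μ).cells).card = lam.ht := by
    rw [hc1, hc2, ← Finset.sum_add_distrib, ← sum_telescope_colLen lam]
    apply Finset.sum_congr rfl
    intro j _
    rw [colLen_flip hle hs]
    have h1 := colLen_le_of_le hle j
    have h2 := hs j
    have h3 : lam.colLen (j + 1) ≤ lam.colLen j := lam.colLen_anti _ _ (by omega)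
    unfold flipf
    omega
  omega

lemma flip_mem {lam μ : YoungDiagram} {k : ℕ} (hec : ∀ j, Even (lam.colLen j))
    (h : μ ≤ lam ∧ μ.HasEvenColumns ∧ IsVerticalStrip μ lam k) :
    k ≤ lam.ht ∧
      (flip lam μ ≤ lam ∧ (flip lam μ).HasEvenColumns ∧
        IsVerticalStrip (flip lam μ) lam (lam.ht - k)) := by
  obtain ⟨hle, hecμ, hstrip⟩ := h
  have hs : ∀ j, lam.colLen (j + 1) ≤ μ.colLen j := (strip_iff hle).1 hstrip.2.2
  obtain ⟨hkle, hcard⟩ := flip_card hle hs hstrip.2.1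
  refine ⟨hkle, flip_le, ?_, flip_le, hcard, ?_⟩
  · intro j
    rw [colLen_flip hle hs]
    have h1 := colLen_le_of_le hle j
    have h2 := hs j
    have heq : flipf lam μ j = lam.colLen (j + 1) + lam.colLen j - μ.colLen j := rfl
    rw [heq, Nat.even_sub (by omega)]
    exact iff_of_true ((hec (j + 1)).add (hec j)) (hecμ j)
  · rw [strip_iff flip_le]
    exact flip_hs hle hs

end YoungDiagram

/-- for a diagram with even profile, `mult lam k = mult lam (ht lam - k)`
for `0 ≤ k ≤ ht lam`; i.e. `mult lam` is symmetric around `ht lam / 2`. -/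
theorem mult_symm_of_evenProfile (lam : YoungDiagram) (hep : lam.HasEvenProfile)
    (k : ℕ) (hk : k ≤ lam.ht) :
    lam.mult k = lam.mult (lam.ht - k) := by
  have hec : ∀ j, Even (lam.colLen j) := YoungDiagram.even_colLen_of_evenProfile hep
  apply Nat.card_congr
  refine
    { toFun := fun μ => ⟨YoungDiagram.flip lam μ.1, (YoungDiagram.flip_mem hec μ.2).2⟩
      invFun := fun μ => ⟨YoungDiagram.flip lam μ.1, by
        have := (YoungDiagram.flip_mem hec μ.2).2
        rwa [Nat.sub_sub_self hk] at this⟩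
      left_inv := ?_
      right_inv := ?_ }
  · rintro ⟨μ, hle, hecμ, hstrip⟩
    apply Subtype.ext
    exact YoungDiagram.flip_flip hle ((YoungDiagram.strip_iff hle).1 hstrip.2.2)
  · rintro ⟨μ, hle, hecμ, hstrip⟩
    apply Subtype.ext
    exact YoungDiagram.flip_flip hle ((YoungDiagram.strip_iff hle).1 hstrip.2.2)
end
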